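/- Let A_i = Φ Ā_i Ψᵀ for i = 1,…,m with Φ, Ψ orthogonal and Ā_i rectangular diagonal with nonnegative diagonals σ^{(i)} ∈ ℝ^{d1}. Suppose there exist reals a_1,…,a_m with Σ_i a_i σ^{(i)} = 𝟙 (the all-ones vector). Let X* ∈ ℝ^{d1×d2}, σ* = diag(Φᵀ X* Ψ) with all entries positive, y_i = ⟨A_i, X*⟩, and X∞ = Φ Diag(σ*) Ψᵀ. Then X∞ is a global minimizer of the nuclear norm over all X ∈ ℝ^{d1×d2} satisfying ⟨A_i, X⟩ = y_i for all i. -/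

import Mathlib

open Matrix

/-- The nuclear norm of a real matrix: the sum of its singular values. -/
noncomputable def nuclearNorm {d1 d2 : ℕ} (X : Matrix (Fin d1) (Fin d2) ℝ) : ℝ :=
  ∑ i : Fin d1, Real.sqrt ((Matrix.posSemidef_self_mul_conjTranspose X).1.eigenvalues i)

/-- The rectangular diagonal matrix in `ℝ^{d1×d2}` with diagonal vector `v`. -/
def rectDiag {d1 d2 : ℕ} (v : Fin d1 → ℝ) : Matrix (Fin d1) (Fin d2) ℝ :=
  Matrix.of fun i j => if (i : ℕ) = (j : ℕ) then v i else 0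

/-!
With `W = Φ Diag(𝟙) Ψᵀ`, the identity `∑ aᵢ σ⁽ⁱ⁾ = 𝟙` gives `W = ∑ aᵢ Aᵢ`, so `⟨W, X⟩ = ∑ aᵢ yᵢ`
is the same for every feasible `X`. Since `W Wᵀ = 1`, `W` is a dual certificate:
`⟨W, X⟩ ≤ ‖X‖_*`, by Cauchy–Schwarz on the rows of `X` and `W` written in an eigenbasis of `X Xᵀ`.
Finally `X∞ X∞ᵀ = Φ Diag(σ*²) Φᵀ`, so `‖X∞‖_* = ∑ σ*ⱼ = ⟨W, X∞⟩`.
-/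

lemma trace_mul_transpose_le_sum_sqrt_mul_sqrt {ι κ : Type*} [Fintype ι] [Fintype κ]
    (Q R : Matrix ι κ ℝ) :
    trace (Q * Rᵀ) ≤ ∑ k, √((Q * Qᵀ) k k) * √((R * Rᵀ) k k) := by
  refine Finset.sum_le_sum fun k _ => ?_
  simpa [Matrix.mul_apply, sq] using Real.sum_mul_le_sqrt_mul_sqrt Finset.univ (Q k) (R k)

lemma charpoly_mul_mul_transpose {n R : Type*} [Fintype n] [DecidableEq n] [CommRing R]
    {B : Matrix n n R} (hB : Bᵀ * B = 1) (D : Matrix n n R) :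
    (B * D * Bᵀ).charpoly = D.charpoly := by
  rw [Matrix.mul_assoc, charpoly_mul_comm, Matrix.mul_assoc, hB, Matrix.mul_one]

namespace Matrix.IsHermitian

variable {n : Type*} [Fintype n] [DecidableEq n] {H : Matrix n n ℝ}

lemma exists_transpose_mul_mul_eq_diagonal (hH : H.IsHermitian) :
    ∃ V : Matrix n n ℝ, V * Vᵀ = 1 ∧ Vᵀ * H * V = diagonal hH.eigenvalues := by
  refine ⟨hH.eigenvectorUnitary, ?_, ?_⟩
  · simpa [star_eq_conjTranspose] using Unitary.mul_star_self_of_mem hH.eigenvectorUnitary.2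
  · simpa [star_eq_conjTranspose, Function.comp_def] using
      hH.conjStarAlgAut_star_eigenvectorUnitary

open Polynomial in
lemma sum_comp_eigenvalues_of_charpoly_eq (hH : H.IsHermitian) {μ : n → ℝ}
    (h : H.charpoly = (diagonal μ).charpoly) (f : ℝ → ℝ) :
    ∑ i, f (hH.eigenvalues i) = ∑ i, f (μ i) := by
  have hroots : Finset.univ.val.map hH.eigenvalues = Finset.univ.val.map μ := by
    have hμ := roots_multiset_prod_X_sub_C (Finset.univ.val.map μ)
    simp only [Multiset.map_map, Function.comp_def, Finset.prod_map_val] at hμ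
    simpa [h, charpoly_diagonal, hμ] using hH.roots_charpoly_eq_eigenvalues.symm
  simpa [Multiset.map_map, Function.comp_def] using congrArg (fun s => (s.map f).sum) hroots

end Matrix.IsHermitian

section nuclearNorm

variable {d1 d2 : ℕ}

lemma nuclearNorm_eq_sum_sqrt_of_mul_transpose_eq {X : Matrix (Fin d1) (Fin d2) ℝ}
    {B : Matrix (Fin d1) (Fin d1) ℝ} (hB : Bᵀ * B = 1) {μ : Fin d1 → ℝ}
    (h : X * Xᵀ = B * diagonal μ * Bᵀ) : nuclearNorm X = ∑ i, √(μ i) := by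
  refine (posSemidef_self_mul_conjTranspose X).1.sum_comp_eigenvalues_of_charpoly_eq ?_ _
  rw [conjTranspose_eq_transpose_of_trivial, h, charpoly_mul_mul_transpose hB]

lemma trace_transpose_mul_le_nuclearNorm {W : Matrix (Fin d1) (Fin d2) ℝ}
    (hW : W * Wᵀ = 1) (X : Matrix (Fin d1) (Fin d2) ℝ) : trace (Wᵀ * X) ≤ nuclearNorm X := by
  set hH := (posSemidef_self_mul_conjTranspose X).1
  obtain ⟨V, hV, hVH⟩ := hH.exists_transpose_mul_mul_eq_diagonal
  have hVX : (Vᵀ * X) * (Vᵀ * X)ᵀ = diagonal hH.eigenvalues := by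
    simpa [Matrix.mul_assoc] using hVH
  have hVW : (Vᵀ * W) * (Vᵀ * W)ᵀ = 1 := by
    rw [transpose_mul, transpose_transpose, Matrix.mul_assoc, ← Matrix.mul_assoc W, hW,
      Matrix.one_mul, mul_eq_one_comm.mp hV]
  calc trace (Wᵀ * X) = trace ((Vᵀ * X) * (Vᵀ * W)ᵀ) := by
        rw [transpose_mul, transpose_transpose, ← Matrix.mul_assoc, trace_mul_comm _ V,
          ← Matrix.mul_assoc, ← Matrix.mul_assoc, hV, Matrix.one_mul, trace_mul_comm]
    _ ≤ ∑ k, √(((Vᵀ * X) * (Vᵀ * X)ᵀ) k k) * √(((Vᵀ * W) * (Vᵀ * W)ᵀ) k k) :=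
        trace_mul_transpose_le_sum_sqrt_mul_sqrt _ _
    _ = ∑ k, √(diagonal hH.eigenvalues k k) * √((1 : Matrix (Fin d1) (Fin d1) ℝ) k k) := by
        rw [hVX, hVW]
    _ = nuclearNorm X := by simp [nuclearNorm]

end nuclearNorm

section rectDiag

variable {d1 d2 : ℕ} {Φ : Matrix (Fin d1) (Fin d1) ℝ} {Ψ : Matrix (Fin d2) (Fin d2) ℝ}

lemma rectDiag_apply (hd : d1 ≤ d2) (v : Fin d1 → ℝ) (i : Fin d1) (l : Fin d2) :
    (rectDiag v : Matrix (Fin d1) (Fin d2) ℝ) i l = if Fin.castLE hd i = l then v i else 0 := by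
  simp [rectDiag, Fin.ext_iff]

lemma rectDiag_mul_transpose (hd : d1 ≤ d2) (v : Fin d1 → ℝ) :
    rectDiag (d2 := d2) v * (rectDiag (d2 := d2) v)ᵀ = diagonal (fun i => v i ^ 2) := by
  ext i j
  by_cases hij : i = j
  · subst hij; simp [Matrix.mul_apply, rectDiag_apply hd, sq]
  · simp [Matrix.mul_apply, rectDiag_apply hd, hij, Fin.castLE_inj]

lemma trace_mul_rectDiag_transpose (hd : d1 ≤ d2) (v : Fin d1 → ℝ)
    (N : Matrix (Fin d1) (Fin d2) ℝ) :
    trace (N * (rectDiag (d2 := d2) v)ᵀ) = ∑ i, v i * N i (Fin.castLE hd i) := by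
  simp [trace, Matrix.mul_apply, rectDiag_apply hd, mul_comm]

lemma trace_conj_rectDiag_transpose_mul (hd : d1 ≤ d2) (v : Fin d1 → ℝ)
    (X : Matrix (Fin d1) (Fin d2) ℝ) :
    trace ((Φ * rectDiag (d2 := d2) v * Ψᵀ)ᵀ * X) =
      ∑ i, v i * (Φᵀ * X * Ψ) i (Fin.castLE hd i) := by
  rw [← trace_mul_rectDiag_transpose hd, transpose_mul, transpose_mul, transpose_transpose,
    trace_mul_comm _ X, Matrix.mul_assoc (Φᵀ * X), Matrix.mul_assoc Φᵀ, trace_mul_comm Φᵀ]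
  simp only [Matrix.mul_assoc]

lemma sum_mul_trace_conj_rectDiag_transpose_mul (hd : d1 ≤ d2) {m : ℕ} {σ : Fin m → Fin d1 → ℝ}
    {a : Fin m → ℝ} (ha : ∀ j, ∑ i, a i * σ i j = 1) (X : Matrix (Fin d1) (Fin d2) ℝ) :
    ∑ i, a i * trace ((Φ * rectDiag (d2 := d2) (σ i) * Ψᵀ)ᵀ * X) =
      trace ((Φ * rectDiag (d2 := d2) (1 : Fin d1 → ℝ) * Ψᵀ)ᵀ * X) := by
  simp only [trace_conj_rectDiag_transpose_mul hd, Finset.mul_sum, Pi.one_apply, one_mul,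
    ← mul_assoc]
  rw [Finset.sum_comm]
  simp only [← Finset.sum_mul, ha, one_mul]

lemma conj_rectDiag_mul_transpose (hd : d1 ≤ d2) (hΨ : Ψᵀ * Ψ = 1) (v : Fin d1 → ℝ) :
    (Φ * rectDiag (d2 := d2) v * Ψᵀ) * (Φ * rectDiag (d2 := d2) v * Ψᵀ)ᵀ =
      Φ * diagonal (fun i => v i ^ 2) * Φᵀ := by
  rw [← rectDiag_mul_transpose hd v]
  simp only [transpose_mul, transpose_transpose, Matrix.mul_assoc]
  rw [← Matrix.mul_assoc Ψᵀ, hΨ, Matrix.one_mul]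

lemma nuclearNorm_conj_rectDiag (hd : d1 ≤ d2) (hΦ : Φᵀ * Φ = 1) (hΨ : Ψᵀ * Ψ = 1)
    (v : Fin d1 → ℝ) :
    nuclearNorm (Φ * rectDiag (d2 := d2) v * Ψᵀ) = ∑ i, |v i| := by
  simp_rw [nuclearNorm_eq_sum_sqrt_of_mul_transpose_eq hΦ (conj_rectDiag_mul_transpose hd hΨ v),
    Real.sqrt_sq_eq_abs]

end rectDiag

theorem spectral_limit_minimizes_nuclear_norm_general
    {d1 d2 m : ℕ} (hd : d1 ≤ d2)
    (Φ : Matrix (Fin d1) (Fin d1) ℝ) (Ψ : Matrix (Fin d2) (Fin d2) ℝ)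
    (hΦ : Φᵀ * Φ = 1) (hΨ : Ψᵀ * Ψ = 1)
    (σmeas : Fin m → Fin d1 → ℝ)
    (A : Fin m → Matrix (Fin d1) (Fin d2) ℝ)
    (hA : ∀ i, A i = Φ * rectDiag (σmeas i) * Ψᵀ)
    (a : Fin m → ℝ) (ha : ∀ j : Fin d1, ∑ i : Fin m, a i * σmeas i j = 1)
    (Xstar : Matrix (Fin d1) (Fin d2) ℝ)
    (σstar : Fin d1 → ℝ)
    (hσstar : ∀ j : Fin d1, σstar j = (Φᵀ * Xstar * Ψ) j (Fin.castLE hd j))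
    (hσstar_pos : ∀ j, 0 < σstar j)
    (y : Fin m → ℝ) (hy : ∀ i, y i = Matrix.trace ((A i)ᵀ * Xstar))
    (Xinf : Matrix (Fin d1) (Fin d2) ℝ)
    (hXinf : Xinf = Φ * rectDiag σstar * Ψᵀ) :
    (∀ i, Matrix.trace ((A i)ᵀ * Xinf) = y i) ∧
    (∀ X : Matrix (Fin d1) (Fin d2) ℝ,
      (∀ i, Matrix.trace ((A i)ᵀ * X) = y i) → nuclearNorm Xinf ≤ nuclearNorm X) := by
  -- With `d2` left to unification, `Φ * rectDiag v * Ψᵀ` elaborates its outer product through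
  -- the (defeq) `CStarMatrix` instance, so we restate `hA` and `hXinf` with the plain product.
  have hA' : ∀ i, A i = Φ * rectDiag (d2 := d2) (σmeas i) * Ψᵀ := hA
  have hXinf' : Xinf = Φ * rectDiag (d2 := d2) σstar * Ψᵀ := hXinf
  have hdiag : ∀ j, (Φᵀ * Xinf * Ψ) j (Fin.castLE hd j) = σstar j := by
    intro j
    rw [hXinf', ← Matrix.mul_assoc, ← Matrix.mul_assoc, hΦ, Matrix.one_mul, Matrix.mul_assoc, hΨ,
      Matrix.mul_one, rectDiag_apply hd, if_pos rfl]
  have hfeas : ∀ i, trace ((A i)ᵀ * Xinf) = y i := by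
    intro i
    simp only [hy, hA', trace_conj_rectDiag_transpose_mul hd, hdiag, hσstar]
  set W := Φ * rectDiag (d2 := d2) (1 : Fin d1 → ℝ) * Ψᵀ with hWdef
  have hW : W * Wᵀ = 1 := by
    rw [hWdef, conj_rectDiag_mul_transpose hd hΨ]
    simp [mul_eq_one_comm.mp hΦ]
  refine ⟨hfeas, fun X hX => ?_⟩
  calc nuclearNorm Xinf = ∑ j, σstar j := by
        simp [hXinf', nuclearNorm_conj_rectDiag hd hΦ hΨ, abs_of_pos (hσstar_pos _)]
    _ = trace (Wᵀ * Xinf) := by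
        simp only [hWdef, trace_conj_rectDiag_transpose_mul hd, hdiag, Pi.one_apply, one_mul]
    _ = trace (Wᵀ * X) := by
        simp only [hWdef, ← sum_mul_trace_conj_rectDiag_transpose_mul hd ha, ← hA', hfeas, hX]
    _ ≤ nuclearNorm X := trace_transpose_mul_le_nuclearNorm hW X

/-- Theorem 3(b): the spectral limit `X∞ = Φ Diag(σ*) Ψᵀ` is a global minimizer of the
nuclear norm over all matrices consistent with the measurements. -/
theorem spectral_limit_minimizes_nuclear_norm
    {d1 d2 m : ℕ} (hd : d1 ≤ d2)
    (Φ : Matrix (Fin d1) (Fin d1) ℝ) (Ψ : Matrix (Fin d2) (Fin d2) ℝ)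
    (hΦ : Φᵀ * Φ = 1) (hΨ : Ψᵀ * Ψ = 1)
    (σmeas : Fin m → Fin d1 → ℝ) (hσmeas : ∀ i j, 0 ≤ σmeas i j)
    (A : Fin m → Matrix (Fin d1) (Fin d2) ℝ)
    (hA : ∀ i, A i = Φ * rectDiag (σmeas i) * Ψᵀ)
    (a : Fin m → ℝ) (ha : ∀ j : Fin d1, ∑ i : Fin m, a i * σmeas i j = 1)
    (Xstar : Matrix (Fin d1) (Fin d2) ℝ)
    (σstar : Fin d1 → ℝ)
    (hσstar : ∀ j : Fin d1, σstar j = (Φᵀ * Xstar * Ψ) j (Fin.castLE hd j))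
    (hσstar_pos : ∀ j, 0 < σstar j)
    (y : Fin m → ℝ) (hy : ∀ i, y i = Matrix.trace ((A i)ᵀ * Xstar))
    (Xinf : Matrix (Fin d1) (Fin d2) ℝ)
    (hXinf : Xinf = Φ * rectDiag σstar * Ψᵀ) :
    (∀ i, Matrix.trace ((A i)ᵀ * Xinf) = y i) ∧
    (∀ X : Matrix (Fin d1) (Fin d2) ℝ,
      (∀ i, Matrix.trace ((A i)ᵀ * X) = y i) → nuclearNorm Xinf ≤ nuclearNorm X) :=
  spectral_limit_minimizes_nuclear_norm_general hd Φ Ψ hΦ hΨ σmeas A hA a ha Xstar σstar hσstar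
    hσstar_pos y hy Xinf hXinf
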